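/- Suppose Q, X ∈ ℝ satisfy α·(μ − X²) + β·Q²/2 = 0. Then the curve (q1, p1, q2, p2)(t) = (Q·cos((1+βX)·t), −Q·sin((1+βX)·t), X, 0) is an exact solution of the 0²iω model system; if 1 + βX ≠ 0 it is periodic with period 2π/|1+βX|. (This is the family of short-periodic orbits, whose amplitudes satisfy the conic relation X² − (β/(2α))·Q² = μ.) -/

import Mathlib

/-- The vector field of the `0²iω` model system, in coordinates
`(q₁, p₁, q₂, p₂) = (y 0, y 1, y 2, y 3)`. -/
noncomputable def F02 (α β μ : ℝ) (y : Fin 4 → ℝ) : Fin 4 → ℝ :=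
  ![(1 + β * y 2) * y 1,
    -((1 + β * y 2) * y 0),
    α * y 3,
    -(α * (μ - (y 2) ^ 2)) - β * ((y 0) ^ 2 + (y 1) ^ 2) / 2]

/-!
With `q₂ ≡ X` and `p₂ ≡ 0` held constant, the `(q₁, p₁)` equations are a harmonic oscillator of
frequency `1 + βX`, solved by a circle of radius `Q`. Along that circle `q₁² + p₁² = Q²`, so the
hypothesis on `(Q, X)` is exactly `ṗ₂ = 0`, which keeps `q₂` constant.
-/

open Real Function

noncomputable def shortPeriodicOrbit (Q X ω s : ℝ) : Fin 4 → ℝ :=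
  ![Q * cos (ω * s), -(Q * sin (ω * s)), X, 0]

/-- At `ω = 0` the period is the junk value `c / 0 = 0`, so no hypothesis on `ω` is needed. -/
theorem Function.Periodic.comp_const_mul_div_abs {α : Type*} {f : ℝ → α} {c : ℝ}
    (hf : Periodic f c) (ω : ℝ) : Periodic (fun s => f (ω * s)) (c / |ω|) := by
  rcases abs_choice ω with h | h <;> rw [h, div_eq_inv_mul]
  · exact hf.const_mul ω
  · rw [inv_neg, neg_mul]
    exact (hf.const_mul ω).neg

theorem shortPeriodicOrbit_periodic (Q X ω : ℝ) :
    Periodic (shortPeriodicOrbit Q X ω) (2 * π / |ω|) :=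
  Periodic.comp_const_mul_div_abs (f := fun θ => ![Q * cos θ, -(Q * sin θ), X, 0])
    (fun θ => by simp) ω

theorem hasDerivAt_shortPeriodicOrbit (Q X ω t : ℝ) :
    HasDerivAt (shortPeriodicOrbit Q X ω)
      ![ω * -(Q * sin (ω * t)), -(ω * (Q * cos (ω * t))), 0, 0] t := by
  have hθ : HasDerivAt (fun s => ω * s) ω t := by simpa using (hasDerivAt_id t).const_mul ω
  rw [hasDerivAt_pi]
  intro i
  fin_cases i
  · simpa [shortPeriodicOrbit, mul_comm, mul_left_comm] using (hθ.cos.const_mul Q)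
  · simpa [shortPeriodicOrbit, mul_comm, mul_left_comm] using (hθ.sin.const_mul Q).fun_neg
  · exact hasDerivAt_const t X
  · exact hasDerivAt_const t 0

theorem F02_shortPeriodicOrbit {α β μ Q X : ℝ} (hQX : α * (μ - X ^ 2) + β * Q ^ 2 / 2 = 0)
    (t : ℝ) :
    F02 α β μ (shortPeriodicOrbit Q X (1 + β * X) t) =
      ![(1 + β * X) * -(Q * sin ((1 + β * X) * t)), -((1 + β * X) * (Q * cos ((1 + β * X) * t))),
        0, 0] := by
  ext i
  fin_cases i
  · rfl
  · rfl
  · simp [F02, shortPeriodicOrbit]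
  · simp [F02, shortPeriodicOrbit]
    linear_combination -hQX - β * Q ^ 2 / 2 * cos_sq_add_sin_sq ((1 + β * X) * t)

/-- The short-periodic family: if `α(μ − X²) + βQ²/2 = 0` then
`(q₁,p₁,q₂,p₂)(t) = (Q cos((1+βX)t), −Q sin((1+βX)t), X, 0)` is an exact solution
of the `0²iω` system, its amplitudes satisfy the conic relation
`X² − (β/(2α))Q² = μ`, and it is periodic with period `2π/|1+βX|` when `1+βX ≠ 0`. -/
theorem zero2iw_short_periodic_orbits (α β μ Q X : ℝ) (hα : 0 < α)
    (hQX : α * (μ - X ^ 2) + β * Q ^ 2 / 2 = 0) :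
    (∀ t : ℝ,
      HasDerivAt
        (fun s : ℝ => (![Q * Real.cos ((1 + β * X) * s),
          -(Q * Real.sin ((1 + β * X) * s)), X, 0] : Fin 4 → ℝ))
        (F02 α β μ ![Q * Real.cos ((1 + β * X) * t),
          -(Q * Real.sin ((1 + β * X) * t)), X, 0]) t) ∧
    X ^ 2 - (β / (2 * α)) * Q ^ 2 = μ ∧
    (1 + β * X ≠ 0 →
      Function.Periodic
        (fun s : ℝ => (![Q * Real.cos ((1 + β * X) * s),
          -(Q * Real.sin ((1 + β * X) * s)), X, 0] : Fin 4 → ℝ))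
        (2 * Real.pi / |1 + β * X|)) := by
  refine ⟨fun t => ?_, ?_, fun _ => shortPeriodicOrbit_periodic Q X (1 + β * X)⟩
  · rw [← shortPeriodicOrbit, F02_shortPeriodicOrbit hQX]
    exact hasDerivAt_shortPeriodicOrbit Q X (1 + β * X) t
  · field_simp
    linear_combination -2 * hQX
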